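/- arXiv:1604.03759 — 4 statements merged into one kernel-verified Lean document; each statement's English description precedes it below -/
import Mathlib

section
/- Let α > 0, Ḣ ≠ 0, Ḣc ≠ 0 be real. Define D = α²(Ḣ⁴ − Ḣc⁴)² + 4Ḣc⁴ and z₋ = (α(Ḣ⁴ − Ḣc⁴) + 2Ḣ² − √D) / (2(1 + αḢ²)). Then z₋ > 0 if Ḣ² > Ḣc², and z₋ < 0 if Ḣ² < Ḣc². -/
/-!
z₋ is the smaller root `(b - √(b² - 4ac)) / (2a)` of `a z² - b z + c` with
`a = 1 + αḢ² > 0`, `b = α(Ḣ⁴ - Ḣc⁴) + 2Ḣ²`, `c = Ḣ⁴ - Ḣc⁴`, and `D = b² - 4ac`.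
Since `√(b² - 4ac)` is below `b` exactly when `4ac > 0` (for `b > 0`) and above `b` when `4ac < 0`,
the smaller root has the sign of `c`.
-/

namespace Real

theorem quadratic_smaller_root_pos {a b c : ℝ} (ha : 0 < a) (hb : 0 < b) (hc : 0 < c) :
    0 < (b - √(b ^ 2 - 4 * a * c)) / (2 * a) := by
  have hsqrt : √(b ^ 2 - 4 * a * c) < b := (sqrt_lt' hb).2 (by nlinarith)
  exact div_pos (sub_pos.2 hsqrt) (by positivity)

theorem quadratic_smaller_root_neg {a b c : ℝ} (ha : 0 < a) (hc : c < 0) :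
    (b - √(b ^ 2 - 4 * a * c)) / (2 * a) < 0 := by
  have hsqrt : b < √(b ^ 2 - 4 * a * c) := lt_sqrt_of_sq_lt (by nlinarith)
  exact div_neg_of_neg_of_pos (sub_neg.2 hsqrt) (by positivity)

end Real

theorem stmt_2_general (α H Hc : ℝ) (hα : 0 < α)
    (D zm : ℝ) (hD : D = α^2 * (H^4 - Hc^4)^2 + 4 * Hc^4)
    (hzm : zm = (α * (H^4 - Hc^4) + 2 * H^2 - Real.sqrt D) / (2 * (1 + α * H^2))) :
    (Hc^2 < H^2 → 0 < zm) ∧ (H^2 < Hc^2 → zm < 0) := by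
  have hD_discr : D = (α * (H^4 - Hc^4) + 2 * H^2) ^ 2 - 4 * (1 + α * H^2) * (H^4 - Hc^4) := by
    rw [hD]; ring
  have ha : 0 < 1 + α * H^2 := by positivity
  rw [hzm, hD_discr]
  constructor
  · intro h
    have hc : 0 < H^4 - Hc^4 := by nlinarith
    exact Real.quadratic_smaller_root_pos ha (by positivity) hc
  · intro h
    have hc : H^4 - Hc^4 < 0 := by nlinarith
    exact Real.quadratic_smaller_root_neg ha hc

/-- z₋, the smaller root of the Lopatinskiĭ quadratic, is positive when Ḣ² > Ḣc²
and negative when Ḣ² < Ḣc². -/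
theorem stmt_2 (α H Hc : ℝ) (hα : 0 < α) (hH : H ≠ 0) (hHc : Hc ≠ 0)
    (D zm : ℝ) (hD : D = α^2 * (H^4 - Hc^4)^2 + 4 * Hc^4)
    (hzm : zm = (α * (H^4 - Hc^4) + 2 * H^2 - Real.sqrt D) / (2 * (1 + α * H^2))) :
    (Hc^2 < H^2 → 0 < zm) ∧ (H^2 < Hc^2 → zm < 0) :=
  stmt_2_general α H Hc hα D zm hD hzm
end

section
/- Let ρ̇ > 0, α > 0, Ḣ ∈ ℝ with αḢ² ≠ 1, η ∈ ℝ. At K = Ḣ²/ρ̇ (the zero of a₁₂), the γ-derivatives of the symbol coefficients satisfy ∂_γ a₁₂ = −2ρ̇ ≠ 0 and ∂_γ a₂₁ = −((αḢ² − 1)² + αḢ² + 1)/(α²Ḣ⁶) ≠ 0, where ∂_γ a₂₁ is computed as (−(αρ̇K − 1)²Ḣ² − αρ̇²K² − ρ̇K)/k² with k = (1 − αρ̇K)Ḣ² − ρ̇K, evaluated at ρ̇K = Ḣ². -/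
/-!
Everything follows by substituting `K * ρ = H ^ 2`: the denominator `k` collapses to `-(α * H ^ 4)`
and the numerator of `∂_γ a₂₁` to `-(H ^ 2 * ((α * H ^ 2 - 1) ^ 2 + α * H ^ 2 + 1))`, whose second
factor is positive as soon as `α > 0`.
-/

theorem neg_add_div_eq_neg_two_mul {ρ H K : ℝ} (hK : K ≠ 0) (hKρ : K * ρ = H ^ 2) :
    -((K * ρ + H ^ 2) / K) = -(2 * ρ) := by
  rw [← hKρ]
  field_simp
  ring

section DegeneratePoint

variable {α ρ H K : ℝ}

theorem a21_denominator_eq_of_mul_eq (hKρ : K * ρ = H ^ 2) :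
    (1 - α * ρ * K) * H ^ 2 - ρ * K = -(α * H ^ 4) := by
  linear_combination (-(α * H ^ 2) - 1) * hKρ

theorem a21_numerator_eq_of_mul_eq (hKρ : K * ρ = H ^ 2) :
    -(α * ρ * K - 1) ^ 2 * H ^ 2 - α * ρ ^ 2 * K ^ 2 - ρ * K
      = -(H ^ 2 * ((α * H ^ 2 - 1) ^ 2 + α * H ^ 2 + 1)) := by
  linear_combination (-(α * H ^ 2) * (α * (ρ * K + H ^ 2) - 2) - α * (ρ * K + H ^ 2) - 1) * hKρ

end DegeneratePoint

theorem stmt_10_general (ρ α H : ℝ) (hρ : 0 < ρ) (hα : 0 < α) (hH : H ≠ 0)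
    (K k : ℝ) (hK : K = H^2 / ρ) (hk : k = (1 - α * ρ * K) * H^2 - ρ * K) :
    (-((K * ρ + H^2) / K) = -(2 * ρ) ∧ -((K * ρ + H^2) / K) ≠ 0) ∧
    ((-(α * ρ * K - 1)^2 * H^2 - α * ρ^2 * K^2 - ρ * K) / k^2
        = -(((α * H^2 - 1)^2 + α * H^2 + 1) / (α^2 * H^6)) ∧
      (-(α * ρ * K - 1)^2 * H^2 - α * ρ^2 * K^2 - ρ * K) / k^2 ≠ 0) := by
  have hKρ : K * ρ = H ^ 2 := (eq_div_iff hρ.ne').mp hK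
  have hK0 : K ≠ 0 := by rw [hK]; positivity
  have ha₁₂ := neg_add_div_eq_neg_two_mul hK0 hKρ
  have ha₂₁ : (-(α * ρ * K - 1)^2 * H^2 - α * ρ^2 * K^2 - ρ * K) / k^2
      = -(((α * H^2 - 1)^2 + α * H^2 + 1) / (α^2 * H^6)) := by
    rw [a21_numerator_eq_of_mul_eq hKρ, hk, a21_denominator_eq_of_mul_eq hKρ]
    field_simp
  refine ⟨⟨ha₁₂, ?_⟩, ha₂₁, ?_⟩
  · rw [ha₁₂]
    exact neg_ne_zero.mpr (by positivity)
  · rw [ha₂₁]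
    exact neg_ne_zero.mpr (by positivity)

/-- At the degenerate point K = Ḣ²/ρ̇ (where a₁₂ = 0), the γ-derivatives of the
plasma-block symbol coefficients satisfy ∂_γ a₁₂ = −2ρ̇ ≠ 0 and
∂_γ a₂₁ = −((αḢ²−1)² + αḢ² + 1)/(α²Ḣ⁶) ≠ 0 (using Ḣ ≠ 0). -/
theorem stmt_10 (ρ α H η : ℝ) (hρ : 0 < ρ) (hα : 0 < α) (hne : α * H^2 ≠ 1) (hH : H ≠ 0)
    (K k : ℝ) (hK : K = H^2 / ρ) (hk : k = (1 - α * ρ * K) * H^2 - ρ * K) :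
    (-((K * ρ + H^2) / K) = -(2 * ρ) ∧ -((K * ρ + H^2) / K) ≠ 0) ∧
    ((-(α * ρ * K - 1)^2 * H^2 - α * ρ^2 * K^2 - ρ * K) / k^2
        = -(((α * H^2 - 1)^2 + α * H^2 + 1) / (α^2 * H^6)) ∧
      (-(α * ρ * K - 1)^2 * H^2 - α * ρ^2 * K^2 - ρ * K) / k^2 ≠ 0) :=
  stmt_10_general ρ α H hρ hα hH K k hK hk
end

section
/- Let ω₁, ω₂, m₁, m₂, μ ∈ ℂ with μ ≠ 0, m₁ ≠ 0, m₁ ≠ ω₁, ω₂ ≠ 0, ω₁² = m₁² − m₂², and let τ ∈ ℂ with ετ ≠ 0. Define the 4×4 block matrix T⁻¹ = diag(T̃⁻¹, [[ω₂, ω₂],[ετ, −ετ]]) where T̃⁻¹ = [[μ(m₁−ω₁), −μ m₂],[μ m₂, μ(m₁−ω₁)]]. Then det T̃⁻¹ = 2m₁ μ²(m₁ − ω₁) ≠ 0, and T · diag([[m₁, −m₂],[m₂, −m₁]], [[0, a₃₄],[a₄₃, 0]]) · T⁻¹ = diag([[−ω₁, −2m₂],[0, ω₁]], [[−ω₂,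 0],[0, ω₂]]), where T = (T⁻¹)⁻¹ and ω₂² = a₃₄ a₄₃. -/
/-!
The conjugating matrix is block diagonal, so everything splits into two `2 × 2` problems.
The first column of `T̃⁻¹` is a `(-ω₁)`-eigenvector of `[[m₁, -m₂], [m₂, -m₁]]` (this is where
`ω₁² = m₁² - m₂²` enters), which makes the first block upper triangular; the columns of the
second block are `∓ω₂`-eigenvectors of the antidiagonal block because `ω₂² = a₃₄ a₄₃`. Hence
`A T⁻¹ = T⁻¹ D`, and `T⁻¹` is invertible since both block determinants are nonzero.
-/

open Matrix

namespace Matrix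

variable {R : Type*} {m n : ℕ}

def blockDiagFin [Zero R] (M : Matrix (Fin m) (Fin m) R) (N : Matrix (Fin n) (Fin n) R) :
    Matrix (Fin (m + n)) (Fin (m + n)) R :=
  reindex finSumFinEquiv finSumFinEquiv (fromBlocks M 0 0 N)

theorem det_blockDiagFin [CommRing R] (M : Matrix (Fin m) (Fin m) R)
    (N : Matrix (Fin n) (Fin n) R) : (blockDiagFin M N).det = M.det * N.det := by
  rw [blockDiagFin, det_reindex_self, det_fromBlocks_zero₂₁]

theorem blockDiagFin_mul [NonUnitalNonAssocSemiring R] (M M' : Matrix (Fin m) (Fin m) R)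
    (N N' : Matrix (Fin n) (Fin n) R) :
    blockDiagFin M N * blockDiagFin M' N' = blockDiagFin (M * M') (N * N') := by
  simp only [blockDiagFin, reindex_apply, submatrix_mul_equiv, fromBlocks_multiply]
  simp

theorem blockDiagFin_of_fin_two [Zero R] (a b c d e f g h : R) :
    blockDiagFin !![a, b; c, d] !![e, f; g, h] =
      !![a, b, 0, 0; c, d, 0, 0; 0, 0, e, f; 0, 0, g, h] := by
  ext i j
  fin_cases i <;> fin_cases j <;> rfl

end Matrix

section

variable {R : Type*} [CommRing R]

theorem det_eigenbasis_fin_two (μ m₁ m₂ ω₁ : R) (hω₁ : ω₁ ^ 2 = m₁ ^ 2 - m₂ ^ 2) :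
    !![μ * (m₁ - ω₁), -(μ * m₂); μ * m₂, μ * (m₁ - ω₁)].det = 2 * m₁ * μ ^ 2 * (m₁ - ω₁) := by
  rw [det_fin_two_of]
  linear_combination μ ^ 2 * hω₁

theorem mul_eigenbasis_eq_mul_upperTriangular (μ m₁ m₂ ω₁ : R)
    (hω₁ : ω₁ ^ 2 = m₁ ^ 2 - m₂ ^ 2) :
    !![m₁, -m₂; m₂, -m₁] * !![μ * (m₁ - ω₁), -(μ * m₂); μ * m₂, μ * (m₁ - ω₁)] =
      !![μ * (m₁ - ω₁), -(μ * m₂); μ * m₂, μ * (m₁ - ω₁)] * !![-ω₁, -(2 * m₂); 0, ω₁] := by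
  ext i j
  fin_cases i <;> fin_cases j <;> simp [mul_apply, Fin.sum_univ_two]
  · linear_combination -μ * hω₁
  · ring
  · ring
  · linear_combination μ * hω₁

theorem antidiag_mul_eigenbasis_eq_mul_diagonal (ω a b c : R) (hω : ω ^ 2 = a * b)
    (hb : b = -c) :
    !![0, a; b, 0] * !![ω, ω; c, -c] = !![ω, ω; c, -c] * !![-ω, 0; 0, ω] := by
  subst hb
  ext i j
  fin_cases i <;> fin_cases j <;> simp [mul_apply, Fin.sum_univ_two]
  · linear_combination hω
  · linear_combination -hω

end

/-- The explicit conjugation used near the pole μ = 0: with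
T⁻¹ = diag(T̃⁻¹, [[ω₂,ω₂],[ετ,−ετ]]), T̃⁻¹ = [[μ(m₁−ω₁), −μm₂],[μm₂, μ(m₁−ω₁)]],
one has det T̃⁻¹ = 2m₁μ²(m₁−ω₁) ≠ 0 and
T·diag([[m₁,−m₂],[m₂,−m₁]], [[0,a₃₄],[a₄₃,0]])·T⁻¹
  = diag([[−ω₁,−2m₂],[0,ω₁]], [[−ω₂,0],[0,ω₂]]),
where T = (T⁻¹)⁻¹, ω₂² = a₃₄a₄₃ (and, as in the paper, a₄₃ = −ετ). -/
theorem stmt_15 (ω1 ω2 m1 m2 μ : ℂ) (hμ : μ ≠ 0) (hm1 : m1 ≠ 0) (hm1ω : m1 ≠ ω1)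
    (hω2 : ω2 ≠ 0) (hω1 : ω1^2 = m1^2 - m2^2)
    (ε : ℝ) (τ : ℂ) (hετ : (ε : ℂ) * τ ≠ 0)
    (a34 a43 : ℂ) (hω2sq : ω2^2 = a34 * a43) (ha43 : a43 = -((ε : ℂ) * τ))
    (Tinv A : Matrix (Fin 4) (Fin 4) ℂ)
    (hTinv : Tinv = !![μ * (m1 - ω1), -(μ * m2), 0, 0;
                       μ * m2, μ * (m1 - ω1), 0, 0;
                       0, 0, ω2, ω2;
                       0, 0, (ε : ℂ) * τ, -((ε : ℂ) * τ)])
    (hA : A = !![m1, -m2, 0, 0; m2, -m1, 0, 0; 0, 0, 0, a34; 0, 0, a43, 0]) :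
    (!![μ * (m1 - ω1), -(μ * m2); μ * m2, μ * (m1 - ω1)]).det
        = 2 * m1 * μ^2 * (m1 - ω1) ∧
      (!![μ * (m1 - ω1), -(μ * m2); μ * m2, μ * (m1 - ω1)]).det ≠ 0 ∧
      Tinv⁻¹ * A * Tinv
        = !![-ω1, -(2 * m2), 0, 0; 0, ω1, 0, 0; 0, 0, -ω2, 0; 0, 0, 0, ω2] := by
  have hdet := det_eigenbasis_fin_two μ m1 m2 ω1 hω1
  have hdet_ne : (!![μ * (m1 - ω1), -(μ * m2); μ * m2, μ * (m1 - ω1)]).det ≠ 0 := by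
    simp [hdet, hμ, hm1, sub_ne_zero.mpr hm1ω]
  refine ⟨hdet, hdet_ne, ?_⟩
  rw [← blockDiagFin_of_fin_two] at hTinv hA
  rw [← blockDiagFin_of_fin_two, hTinv, hA]
  have hunit : IsUnit (blockDiagFin !![μ * (m1 - ω1), -(μ * m2); μ * m2, μ * (m1 - ω1)]
      !![ω2, ω2; (ε : ℂ) * τ, -((ε : ℂ) * τ)]).det := by
    rw [det_blockDiagFin, det_fin_two_of ω2]
    refine (mul_ne_zero hdet_ne ?_).isUnit
    rw [show ω2 * -((ε : ℂ) * τ) - ω2 * (ε * τ) = -(2 * ω2 * (ε * τ)) by ring]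
    exact neg_ne_zero.mpr (mul_ne_zero (mul_ne_zero two_ne_zero hω2) hετ)
  rw [Matrix.mul_assoc, blockDiagFin_mul, mul_eigenbasis_eq_mul_upperTriangular μ m1 m2 ω1 hω1,
    antidiag_mul_eigenbasis_eq_mul_diagonal ω2 a34 a43 _ hω2sq ha43, ← blockDiagFin_mul,
    nonsing_inv_mul_cancel_left _ _ hunit]
end

section
/- Let χ ∈ C₀^∞(ℝ) and M > 1 satisfy χ'(s) = 0 for |s| ≥ M and |χ'(s)| ≤ 2/M for all s. Then there is a constant C, independent of M, such that for all x₁ > 0, ∫_{x₁}^{∞} |χ'(s)|² · x₁ / (s √(s² − x₁²)) ds ≤ C M^{−3/2}. -/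
open MeasureTheory Real Set Filter

lemma weight_deriv {x₁ : ℝ} (hx : 0 < x₁) {s : ℝ} (hs : s ∈ Set.Ioi x₁) :
    HasDerivAt (fun s => Real.arccos (x₁ / s))
      (x₁ / (s * Real.sqrt (s^2 - x₁^2))) s := by
  have hsx : x₁ < s := hs
  have hs0 : 0 < s := hx.trans hsx
  have hu0 : 0 < x₁ / s := div_pos hx hs0
  have hu1 : x₁ / s < 1 := (div_lt_one hs0).2 hsx
  have h1 : HasDerivAt (fun s : ℝ => x₁ / s) (-x₁ / s^2) s := by
    have := (hasDerivAt_inv hs0.ne').const_mul x₁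
    simpa [div_eq_mul_inv, neg_div] using this
  have h2 := (Real.hasDerivAt_arccos (by linarith) hu1.ne).comp s h1
  refine h2.congr_deriv (Eq.symm ?_)
  have hpos : 0 < s^2 - x₁^2 := by nlinarith
  have hsq : Real.sqrt (1 - (x₁/s)^2) = Real.sqrt (s^2 - x₁^2) / s := by
    rw [eq_div_iff hs0.ne']
    have h9 : Real.sqrt (1 - (x₁/s)^2) * s = Real.sqrt ((1 - (x₁/s)^2) * s^2) := by
      rw [Real.sqrt_mul (by nlinarith : (0:ℝ) ≤ 1 - (x₁/s)^2), Real.sqrt_sq hs0.le]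
    rw [h9]
    congr 1
    field_simp
  rw [hsq]
  have h3 : Real.sqrt (s^2 - x₁^2) > 0 := Real.sqrt_pos.2 hpos
  field_simp

lemma weight_key {x₁ : ℝ} (hx : 0 < x₁) :
    IntegrableOn (fun s => x₁ / (s * Real.sqrt (s^2 - x₁^2))) (Set.Ioi x₁) ∧
    ∫ s in Set.Ioi x₁, x₁ / (s * Real.sqrt (s^2 - x₁^2)) = Real.pi / 2 := by
  have hcont : ContinuousWithinAt (fun s => Real.arccos (x₁ / s)) (Set.Ici x₁) x₁ := by
    exact (Real.continuous_arccos.continuousAt.comp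
      ((continuousAt_const.div continuousAt_id hx.ne'))).continuousWithinAt
  have hderiv := fun s hs => weight_deriv hx (s := s) hs
  have hpos : ∀ s ∈ Set.Ioi x₁, 0 ≤ x₁ / (s * Real.sqrt (s^2 - x₁^2)) := by
    intro s hs
    have hs0 : 0 < s := hx.trans hs
    positivity
  have htend : Tendsto (fun s => Real.arccos (x₁ / s)) atTop (nhds (Real.pi / 2)) := by
    have h0 : Tendsto (fun s : ℝ => x₁ / s) atTop (nhds 0) :=
      tendsto_const_nhds.div_atTop tendsto_id
    have := (Real.continuous_arccos.continuousAt (x := 0)).tendsto.comp h0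
    simpa [Real.arccos_zero, Function.comp_def] using this
  constructor
  · exact integrableOn_Ioi_deriv_of_nonneg hcont hderiv hpos htend
  · have := integral_Ioi_of_hasDerivAt_of_nonneg hcont hderiv hpos htend
    simpa [div_self hx.ne', Real.arccos_one] using this

/-- The key integral estimate in the lifting lemma: if χ ∈ C₀^∞(ℝ), M > 1, χ'(s) = 0
for |s| ≥ M and |χ'(s)| ≤ 2/M, then for all x₁ > 0,
∫_{x₁}^∞ |χ'(s)|² x₁/(s√(s²−x₁²)) ds ≤ C M^{−3/2}, with C independent of M. -/
theorem stmt_16 :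
    ∃ C : ℝ, 0 < C ∧ ∀ (M : ℝ), 1 < M → ∀ χ : ℝ → ℝ,
      ContDiff ℝ (⊤ : ℕ∞) χ → HasCompactSupport χ →
      (∀ s : ℝ, M ≤ |s| → deriv χ s = 0) →
      (∀ s : ℝ, |deriv χ s| ≤ 2 / M) →
      ∀ x₁ : ℝ, 0 < x₁ →
        ∫ s in Set.Ioi x₁, (deriv χ s)^2 * (x₁ / (s * Real.sqrt (s^2 - x₁^2)))
          ≤ C * M ^ (-(3/2) : ℝ) := by
  refine ⟨2 * Real.pi, by positivity, ?_⟩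
  intro M hM χ hχ _ _ hbound x₁ hx
  have hM0 : 0 < M := lt_trans one_pos hM
  obtain ⟨hint, hval⟩ := weight_key hx
  set w : ℝ → ℝ := fun s => x₁ / (s * Real.sqrt (s^2 - x₁^2)) with hw
  have hintb : IntegrableOn (fun s => (2/M)^2 * w s) (Set.Ioi x₁) := hint.const_mul _
  have hmeas : AEStronglyMeasurable (fun s => (deriv χ s)^2 * w s)
      (volume.restrict (Set.Ioi x₁)) := by
    apply Continuous.aestronglyMeasurable ?_ |>.mul ?_
    · exact ((hχ.continuous_deriv (by simp)).pow 2)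
    · apply Measurable.aestronglyMeasurable
      exact (measurable_const.div ((measurable_id.mul
        ((measurable_id.pow_const 2).sub measurable_const).sqrt)))
  have hle : ∀ s ∈ Set.Ioi x₁, (deriv χ s)^2 * w s ≤ (2/M)^2 * w s := by
    intro s hs
    have hw0 : 0 ≤ w s := by
      have hs0 : 0 < s := hx.trans hs
      have : (0:ℝ) ≤ Real.sqrt (s^2 - x₁^2) := Real.sqrt_nonneg _
      positivity
    apply mul_le_mul_of_nonneg_right _ hw0
    calc (deriv χ s)^2 = |deriv χ s|^2 := (sq_abs _).symm
      _ ≤ (2/M)^2 := by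
          apply pow_le_pow_left₀ (abs_nonneg _) (hbound s)
  have hintf : IntegrableOn (fun s => (deriv χ s)^2 * w s) (Set.Ioi x₁) := by
    refine MeasureTheory.Integrable.mono hintb hmeas ?_
    filter_upwards [ae_restrict_mem measurableSet_Ioi] with s hs
    have h := hle s hs
    have hw0 : 0 ≤ w s := by
      have hs0 : 0 < s := hx.trans hs
      positivity
    rw [Real.norm_eq_abs, Real.norm_eq_abs, abs_of_nonneg (by positivity),
      abs_of_nonneg (by positivity)]
    exact h
  calc ∫ s in Set.Ioi x₁, (deriv χ s)^2 * w s
      ≤ ∫ s in Set.Ioi x₁, (2/M)^2 * w s :=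
        setIntegral_mono_on hintf hintb measurableSet_Ioi hle
    _ = (2/M)^2 * (Real.pi / 2) := by rw [integral_const_mul, hval]
    _ = 2 * Real.pi * (M^2)⁻¹ := by field_simp
    _ ≤ 2 * Real.pi * M ^ (-(3/2) : ℝ) := by
        apply mul_le_mul_of_nonneg_left _ (by positivity)
        have h2 : (M^2)⁻¹ = M ^ ((-2 : ℝ)) := by
          rw [Real.rpow_neg hM0.le]
          norm_num
        rw [h2]
        exact Real.rpow_le_rpow_of_exponent_le hM.le (by norm_num)
end
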